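/- arXiv:2507.12515 — 5 statements merged into one kernel-verified Lean document; each statement's English description precedes it below -/
import Mathlib

section
/- Let G be a finite group, α a U(1)-valued 2-cocycle on G, and g ∈ G. The map φ_g: Z(g) → U(1) defined by φ_g(h) := α(g,h)/α(h,g) is a group homomorphism. -/
/-- φ_g(h) := α(g,h)/α(h,g) is a group homomorphism on the centralizer Z(g). -/
theorem slant_is_hom {G : Type*} [Group G] [Fintype G]
    (α : G → G → ℂ) (hnorm : ∀ g g', ‖α g g'‖ = 1)
    (hcoc : ∀ g g' g'', α g g' * α (g * g') g'' = α g (g' * g'') * α g' g'')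
    (g : G) (h h' : G) (hh : g * h = h * g) (hh' : g * h' = h' * g) :
    α g (h * h') / α (h * h') g = (α g h / α h g) * (α g h' / α h' g) := by
  have hne : ∀ a b : G, α a b ≠ 0 := by
    intro a b h0
    have := hnorm a b
    simp [h0] at this
  have e1 := hcoc g h h'
  have e2 := hcoc h h' g
  have e3 := hcoc h g h'
  rw [← hh, hh'] at e3
  rw [div_mul_div_comm, div_eq_div_iff (hne _ _) (mul_ne_zero (hne _ _) (hne _ _))]
  have key : α g (h * h') * (α h g * α h' g) * α h h' =
      α g h * α g h' * α (h * h') g * α h h' := by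
    linear_combination (-(α h g * α h' g)) * e1 + (-(α g h * α g h')) * e2
      + (α g h * α h' g) * e3
  exact mul_right_cancel₀ (hne _ _) key
end

section
/- Let G be a finite group, α a U(1)-valued 2-cocycle on G, and g ∈ G. Then the sum over h ∈ Z(g) of α(g,h)/α(h,g) equals |Z(g)| if g is α-regular, and equals 0 otherwise. -/
open scoped Classical in
/-- The sum over h ∈ Z(g) of α(g,h)/α(h,g) is |Z(g)| if g is α-regular and 0 otherwise. -/
theorem sum_slant_centralizer {G : Type*} [Group G] [Fintype G]
    (α : G → G → ℂ) (hnorm : ∀ g g', ‖α g g'‖ = 1)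
    (hcoc : ∀ g g' g'', α g g' * α (g * g') g'' = α g (g' * g'') * α g' g'')
    (g : G) :
    ∑ h ∈ Finset.univ.filter (fun h : G => g * h = h * g), α g h / α h g =
      if (∀ h : G, g * h = h * g → α g h = α h g)
      then ((Finset.univ.filter (fun h : G => g * h = h * g)).card : ℂ)
      else 0 := by
  have hne : ∀ a b, α a b ≠ 0 := by
    intro a b h
    have := hnorm a b
    rw [h] at this
    simp at this
  have hmul : ∀ h k : G, g * h = h * g → g * k = k * g →
      α g (h * k) / α (h * k) g = (α g h / α h g) * (α g k / α k g) := by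
    intro h k hh hk
    have e1 := hcoc g h k
    rw [hh] at e1
    have e2 := hcoc h k g
    rw [← hk] at e2
    have e3 := hcoc h g k
    have key : α g (h * k) * (α h g * α k g) = α g h * α g k * α (h * k) g := by
      apply mul_right_cancel₀ (hne h k)
      linear_combination (-(α h g * α k g)) * e1 + (α g h * α k g) * e3 +
        (-(α g h * α g k)) * e2
    rw [div_mul_div_comm, div_eq_div_iff (hne _ _) (mul_ne_zero (hne _ _) (hne _ _))]
    linear_combination key
  set S := Finset.univ.filter (fun h : G => g * h = h * g) with hS
  split_ifs with hreg
  · have h1 : ∀ h ∈ S, α g h / α h g = 1 := by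
      intro h hh
      rw [hS, Finset.mem_filter] at hh
      rw [div_eq_one_iff_eq (hne h g)]
      exact hreg h hh.2
    rw [Finset.sum_congr rfl h1]
    simp
  · push_neg at hreg
    obtain ⟨h₀, hc, hne0⟩ := hreg
    have hf0 : α g h₀ / α h₀ g ≠ 1 :=
      fun h' => hne0 ((div_eq_one_iff_eq (hne h₀ g)).mp h')
    have hmem : ∀ h ∈ S, h₀ * h ∈ S := by
      intro h hh
      rw [hS, Finset.mem_filter] at hh ⊢
      refine ⟨Finset.mem_univ _, ?_⟩
      rw [← mul_assoc, hc, mul_assoc, hh.2, ← mul_assoc]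
    have hmem' : ∀ h ∈ S, h₀⁻¹ * h ∈ S := by
      intro h hh
      rw [hS, Finset.mem_filter] at hh ⊢
      refine ⟨Finset.mem_univ _, ?_⟩
      have hc' : g * h₀⁻¹ = h₀⁻¹ * g := (Commute.inv_right hc).eq
      rw [← mul_assoc, hc', mul_assoc, hh.2, ← mul_assoc]
    have htrans : ∑ h ∈ S, α g h / α h g = ∑ h ∈ S, α g (h₀ * h) / α (h₀ * h) g := by
      refine Finset.sum_nbij' (fun h => h₀⁻¹ * h) (fun h => h₀ * h) hmem' hmem
        (fun h _ => by group) (fun h _ => by group) ?_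
      intro h hh
      congr 1 <;> rw [mul_inv_cancel_left]
    have hS2 : ∀ h ∈ S, α g (h₀ * h) / α (h₀ * h) g =
        (α g h₀ / α h₀ g) * (α g h / α h g) := by
      intro h hh
      rw [hS, Finset.mem_filter] at hh
      exact hmul h₀ h hc hh.2
    rw [Finset.sum_congr rfl hS2, ← Finset.mul_sum] at htrans
    have : (α g h₀ / α h₀ g - 1) * ∑ h ∈ S, α g h / α h g = 0 := by
      linear_combination -htrans
    rcases mul_eq_zero.mp this with h' | h'
    · exact absurd (by linear_combination h') hf0
    · exact h'
end

section
/- Let G be a finite group and α a U(1)-valued 2-cocycle on G. The number of α-regular conjugacy classes of G equals (1/|G|) · Σ_{g,g' ∈ G, gg'=g'g} α(g,g')/α(g',g). -/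
/-!
For commuting `g, h` the ratio `ε_g(h) = α(g,h)/α(h,g)` is multiplicative in `h`, so it is a
character of the centralizer `Z(g)`, trivial exactly when `g` is `α`-regular; by orthogonality the
inner sum over `g'` is `|Z(g)|` or `0`. Regularity is a class property: the twisted right
translations `T_g f (x) = α(x,g) f(xg)` satisfy `T_g T_h = α(g,h) T_{gh}`, so `ε_g(h)` is the
scalar by which `T_g` and `T_h` fail to commute, and conjugating by `T_x` (invertible up to a
scalar) preserves it. Finally `∑_{g regular} |Z(g)| = |G| · #(regular classes)` by
orbit–stabilizer.
-/

open Finset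

namespace TwistedGroup

variable {G K : Type*} [Group G] [Field K] {α : G → G → K}

def IsTwoCocycle (α : G → G → K) : Prop :=
  ∀ g g' g'', α g g' * α (g * g') g'' = α g (g' * g'') * α g' g''

def IsAlphaRegular (α : G → G → K) (g : G) : Prop :=
  ∀ h, g * h = h * g → α g h = α h g

theorem IsTwoCocycle.apply_one_right (hcoc : IsTwoCocycle α) (hα : ∀ g h, α g h ≠ 0) (g : G) :
    α g 1 = α 1 1 := by
  have h := hcoc g 1 1
  simp only [mul_one] at h
  exact mul_left_cancel₀ (hα g 1) h

theorem IsTwoCocycle.apply_one_left (hcoc : IsTwoCocycle α) (hα : ∀ g h, α g h ≠ 0) (g : G) :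
    α 1 g = α 1 1 := by
  have h := hcoc 1 1 g
  simp only [one_mul] at h
  exact (mul_right_cancel₀ (hα 1 g) h).symm

def twistedShift (α : G → G → K) (g : G) : Module.End K (G → K) where
  toFun f x := α x g * f (x * g)
  map_add' _ _ := by funext x; simp [mul_add]
  map_smul' _ _ := by funext x; simp only [Pi.smul_apply, smul_eq_mul, RingHom.id_apply]; ring

theorem twistedShift_apply (g : G) (f : G → K) (x : G) :
    twistedShift α g f x = α x g * f (x * g) := rfl

theorem twistedShift_mul (hcoc : IsTwoCocycle α) (g h : G) :
    twistedShift α g * twistedShift α h = α g h • twistedShift α (g * h) := by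
  ext f x
  simp only [Module.End.mul_apply, LinearMap.smul_apply, Pi.smul_apply, smul_eq_mul,
    twistedShift_apply, ← mul_assoc x g h]
  linear_combination f (x * g * h) * hcoc x g h

theorem twistedShift_one (hcoc : IsTwoCocycle α) (hα : ∀ g h, α g h ≠ 0) :
    twistedShift α 1 = α 1 1 • (1 : Module.End K (G → K)) := by
  ext f x
  simp [twistedShift_apply, hcoc.apply_one_right hα]

theorem eq_of_smul_twistedShift_eq (hα : ∀ g h, α g h ≠ 0) {c d : K} {g : G}
    (h : c • twistedShift α g = d • twistedShift α g) : c = d := by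
  have h1 := congrFun (LinearMap.congr_fun h fun _ => 1) 1
  simp only [LinearMap.smul_apply, Pi.smul_apply, twistedShift_apply, smul_eq_mul,
    mul_one] at h1
  exact mul_right_cancel₀ (hα 1 g) h1

theorem twistedShift_inv_mul_self (hcoc : IsTwoCocycle α) (hα : ∀ g h, α g h ≠ 0) (x : G) :
    twistedShift α x⁻¹ * twistedShift α x = (α x⁻¹ x * α 1 1) • (1 : Module.End K (G → K)) := by
  rw [twistedShift_mul hcoc, inv_mul_cancel, twistedShift_one hcoc hα, smul_smul]

theorem twistedShift_conj (hcoc : IsTwoCocycle α) (x g : G) :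
    twistedShift α x * twistedShift α g * twistedShift α x⁻¹ =
      (α x g * α (x * g) x⁻¹) • twistedShift α (x * g * x⁻¹) := by
  rw [twistedShift_mul hcoc, smul_mul_assoc, twistedShift_mul hcoc, smul_smul]

theorem smul_twistedShift_mul_comm (hcoc : IsTwoCocycle α) {g k : G} (hgk : g * k = k * g) :
    α k g • (twistedShift α g * twistedShift α k) =
      α g k • (twistedShift α k * twistedShift α g) := by
  rw [twistedShift_mul hcoc, twistedShift_mul hcoc, smul_smul, smul_smul, hgk, mul_comm]

theorem mul_apply_conj_eq_of_commute (hcoc : IsTwoCocycle α) (hα : ∀ g h, α g h ≠ 0) (x : G)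
    {g k : G} (hgk : g * k = k * g) :
    α k g * α (x * g * x⁻¹) (x * k * x⁻¹) = α g k * α (x * k * x⁻¹) (x * g * x⁻¹) := by
  have comm := smul_twistedShift_mul_comm hcoc hgk
  have hx := twistedShift_inv_mul_self hcoc hα x
  set T := twistedShift α
  set c := α x⁻¹ x * α 1 1
  have conj_mul : ∀ u v, (T x * T u * T x⁻¹) * (T x * T v * T x⁻¹) =
      c • (T x * (T u * T v) * T x⁻¹) := fun u v => by
    calc (T x * T u * T x⁻¹) * (T x * T v * T x⁻¹)
        = T x * T u * (T x⁻¹ * T x) * T v * T x⁻¹ := by noncomm_ring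
      _ = _ := by rw [hx]; simp only [mul_smul_comm, smul_mul_assoc, mul_one, mul_assoc]
  have key : α k g • ((T x * T g * T x⁻¹) * (T x * T k * T x⁻¹)) =
      α g k • ((T x * T k * T x⁻¹) * (T x * T g * T x⁻¹)) := by
    calc _ = c • (T x * (α k g • (T g * T k)) * T x⁻¹) := by
          rw [conj_mul, mul_smul_comm, smul_mul_assoc, smul_comm]
      _ = c • (T x * (α g k • (T k * T g)) * T x⁻¹) := by rw [comm]
      _ = _ := by rw [conj_mul, mul_smul_comm, smul_mul_assoc, smul_comm]
  have hconj : (x * g * x⁻¹) * (x * k * x⁻¹) = (x * k * x⁻¹) * (x * g * x⁻¹) := by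
    calc _ = x * (g * k) * x⁻¹ := by group
      _ = x * (k * g) * x⁻¹ := by rw [hgk]
      _ = _ := by group
  rw [twistedShift_conj hcoc, twistedShift_conj hcoc, smul_mul_smul_comm, smul_mul_smul_comm,
    twistedShift_mul hcoc, twistedShift_mul hcoc, hconj, smul_smul, smul_smul, smul_smul,
    smul_smul] at key
  have hν : (α x g * α (x * g) x⁻¹) * (α x k * α (x * k) x⁻¹) ≠ 0 := by
    simp only [ne_eq, mul_eq_zero, hα, or_self, not_false_eq_true]
  apply mul_left_cancel₀ hν
  linear_combination eq_of_smul_twistedShift_eq hα key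

theorem IsAlphaRegular.conj (hcoc : IsTwoCocycle α) (hα : ∀ g h, α g h ≠ 0) {g : G}
    (hg : IsAlphaRegular α g) (x : G) : IsAlphaRegular α (x * g * x⁻¹) := by
  intro h hh
  have hk : x * (x⁻¹ * h * x) * x⁻¹ = h := by group
  have hcomm : g * (x⁻¹ * h * x) = x⁻¹ * h * x * g := by
    calc _ = x⁻¹ * (x * g * x⁻¹ * h) * x := by group
      _ = x⁻¹ * (h * (x * g * x⁻¹)) * x := by rw [hh]
      _ = _ := by group
  have key := mul_apply_conj_eq_of_commute hcoc hα x hcomm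
  rw [hk, hg _ hcomm] at key
  exact mul_left_cancel₀ (hα _ _) key

theorem isAlphaRegular_iff_of_isConj (hcoc : IsTwoCocycle α) (hα : ∀ g h, α g h ≠ 0)
    {g g' : G} (h : IsConj g g') : IsAlphaRegular α g ↔ IsAlphaRegular α g' := by
  obtain ⟨x, rfl⟩ := isConj_iff.mp h
  refine ⟨fun hg => hg.conj hcoc hα x, fun hg => ?_⟩
  simpa [mul_assoc] using hg.conj hcoc hα x⁻¹

theorem forall_mk_eq_isAlphaRegular_iff (hcoc : IsTwoCocycle α) (hα : ∀ g h, α g h ≠ 0)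
    (g : G) :
    (∀ g', ConjClasses.mk g' = ConjClasses.mk g → IsAlphaRegular α g') ↔ IsAlphaRegular α g :=
  ⟨fun h => h g rfl, fun hg _ hg' =>
    (isAlphaRegular_iff_of_isConj hcoc hα (ConjClasses.mk_eq_mk_iff_isConj.mp hg')).mpr hg⟩

theorem apply_mul_div_apply_mul (hcoc : IsTwoCocycle α) (hα : ∀ g h, α g h ≠ 0) {g h h' : G}
    (H : g * h = h * g) (H' : g * h' = h' * g) :
    α g (h * h') / α (h * h') g = α g h / α h g * (α g h' / α h' g) := by
  have e1 := hcoc g h h'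
  have e2 := hcoc h h' g
  have e3 := hcoc h g h'
  rw [← H] at e3
  rw [← H'] at e2
  have key : α g (h * h') * (α h g * α h' g) = α (h * h') g * (α g h * α g h') := by
    apply mul_left_cancel₀ (hα h h')
    linear_combination (α g h * α h' g) * e3 - (α h g * α h' g) * e1 - (α g h * α g h') * e2
  have := hα (h * h') g
  have := hα h g
  have := hα h' g
  field_simp
  linear_combination key

def centralizerCharacter (hcoc : IsTwoCocycle α) (hα : ∀ g h, α g h ≠ 0) (g : G) :
    Subgroup.centralizer {g} →* K where
  toFun h := α g h / α h g
  map_one' := by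
    simp only [OneMemClass.coe_one, hcoc.apply_one_right hα, hcoc.apply_one_left hα]
    exact div_self (hα 1 1)
  map_mul' h h' := apply_mul_div_apply_mul hcoc hα
    (Subgroup.mem_centralizer_singleton_iff.mp h.2).symm
    (Subgroup.mem_centralizer_singleton_iff.mp h'.2).symm

theorem centralizerCharacter_eq_one_iff (hcoc : IsTwoCocycle α) (hα : ∀ g h, α g h ≠ 0)
    (g : G) : centralizerCharacter hcoc hα g = 1 ↔ IsAlphaRegular α g := by
  simp only [DFunLike.ext_iff, MonoidHom.one_apply, centralizerCharacter, MonoidHom.coe_mk,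
    OneHom.coe_mk, div_eq_one_iff_eq (hα _ _), Subtype.forall,
    Subgroup.mem_centralizer_singleton_iff, IsAlphaRegular, eq_comm (b := g * _)]

open scoped Classical in
theorem sum_commuting_apply_div_apply [Fintype G] (hcoc : IsTwoCocycle α)
    (hα : ∀ g h, α g h ≠ 0) (g : G) :
    ∑ h : G, (if g * h = h * g then α g h / α h g else 0) =
      if IsAlphaRegular α g then (Nat.card (Subgroup.centralizer {g}) : K) else 0 := by
  rw [← Finset.sum_filter, Finset.sum_subtype _ (p := (· ∈ Subgroup.centralizer {g}))
    (by simp [Subgroup.mem_centralizer_singleton_iff, eq_comm]),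
    ← centralizerCharacter_eq_one_iff hcoc hα, Nat.card_eq_fintype_card]
  exact (sum_hom_units (centralizerCharacter hcoc hα g)).trans (by split_ifs <;> simp)

end TwistedGroup

theorem Subgroup.card_centralizer_mul_ncard_conjClass {G : Type*} [Group G] [Finite G] (g : G) :
    Nat.card (Subgroup.centralizer {g}) * (ConjClasses.mk g).carrier.ncard = Nat.card G := by
  rw [Subgroup.nat_card_centralizer_nat_card_stabilizer, ← ConjAct.orbit_eq_carrier_conjClasses,
    ← MulAction.index_stabilizer, Subgroup.card_mul_index]
  exact Nat.card_congr ConjAct.ofConjAct.toEquiv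

open scoped Classical in
theorem ConjClasses.sum_card_centralizer {G : Type*} [Group G] [Fintype G] (C : ConjClasses G) :
    ∑ g ∈ univ.filter (ConjClasses.mk · = C), Nat.card (Subgroup.centralizer {g}) =
      Nat.card G := by
  set S := univ.filter (ConjClasses.mk · = C)
  have hS : C.carrier = S := by ext; simp [S, ConjClasses.mem_carrier_iff_mk_eq]
  obtain ⟨g₀, rfl⟩ := ConjClasses.mk_surjective C
  have hS_pos : 0 < S.card := Finset.card_pos.mpr ⟨g₀, by simp [S]⟩
  refine Nat.eq_of_mul_eq_mul_right hS_pos ?_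
  calc (∑ g ∈ S, Nat.card (Subgroup.centralizer {g})) * S.card
      = ∑ g ∈ S, Nat.card (Subgroup.centralizer {g}) * (ConjClasses.mk g).carrier.ncard := by
        rw [Finset.sum_mul]
        refine Finset.sum_congr rfl fun g hg => ?_
        rw [(Finset.mem_filter.mp hg).2, hS, Set.ncard_coe_finset]
    _ = Nat.card G * S.card := by
        rw [Finset.sum_congr rfl fun g _ => Subgroup.card_centralizer_mul_ncard_conjClass g,
          Finset.sum_const, smul_eq_mul, mul_comm]

open scoped Classical in
theorem ConjClasses.sum_card_centralizer_mul {G R : Type*} [Group G] [Fintype G]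
    [CommSemiring R] (f : ConjClasses G → R) :
    ∑ g : G, (Nat.card (Subgroup.centralizer {g}) : R) * f (ConjClasses.mk g) =
      Nat.card G * ∑ C, f C := by
  rw [← Finset.sum_fiberwise univ ConjClasses.mk, Finset.mul_sum]
  refine Finset.sum_congr rfl fun C _ => ?_
  rw [← ConjClasses.sum_card_centralizer C, Nat.cast_sum, Finset.sum_mul]
  exact Finset.sum_congr rfl fun g hg => by rw [(Finset.mem_filter.mp hg).2]

open TwistedGroup

open scoped Classical in
/-- The number of α-regular conjugacy classes equals
(1/|G|)·Σ over commuting pairs of α(g,g')/α(g',g). -/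
theorem card_alphaRegular_classes {G : Type*} [Group G] [Fintype G]
    (α : G → G → ℂ) (hnorm : ∀ g g', ‖α g g'‖ = 1)
    (hcoc : ∀ g g' g'', α g g' * α (g * g') g'' = α g (g' * g'') * α g' g'') :
    (Nat.card {C : ConjClasses G //
        ∀ g : G, ConjClasses.mk g = C → ∀ h : G, g * h = h * g → α g h = α h g} : ℂ) =
      (Fintype.card G : ℂ)⁻¹ *
        ∑ g : G, ∑ g' : G, if g * g' = g' * g then α g g' / α g' g else 0 := by
  have hα : ∀ g g', α g g' ≠ 0 := fun g g' h => by simpa [h] using hnorm g g'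
  have hsum : ∑ g : G, ∑ g' : G, (if g * g' = g' * g then α g g' / α g' g else 0) =
      Fintype.card G *
        Nat.card {C : ConjClasses G // ∀ g, ConjClasses.mk g = C → IsAlphaRegular α g} := by
    calc _ = ∑ g : G, (Nat.card (Subgroup.centralizer {g}) : ℂ) *
          if ∀ g', ConjClasses.mk g' = ConjClasses.mk g → IsAlphaRegular α g' then 1 else 0 := by
          refine Finset.sum_congr rfl fun g _ => ?_
          rw [sum_commuting_apply_div_apply hcoc hα, mul_ite, mul_one, mul_zero]
          simp only [forall_mk_eq_isAlphaRegular_iff hcoc hα]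
      _ = _ := by
          rw [ConjClasses.sum_card_centralizer_mul
              fun C => if ∀ g, ConjClasses.mk g = C → IsAlphaRegular α g then (1 : ℂ) else 0,
            Finset.sum_boole, Nat.card_eq_fintype_card, Nat.card_eq_fintype_card,
            Fintype.card_subtype]
  rw [hsum, inv_mul_cancel_left₀ (Nat.cast_ne_zero.mpr Fintype.card_ne_zero)]
  rfl
end

section
/- Let G be a finite group and α a U(1)-valued 2-cocycle. In the α-twisted group algebra ℂ^α[G] (with product |g⟩·|g'⟩ = α(g,g')|gg'⟩), the element Ψ_g := Σ_{x ∈ G} (α(x,g)α(xg,x⁻¹)/α(x,x⁻¹)) |xgx⁻¹⟩ lies in the center: |g'⟩·Ψ_g = Ψ_g·|g'⟩ for all g' ∈ G. Moreover Ψ_g = 0 unless g is α-regular. -/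
/-! The monomials `a|g⟩` with `a` a unit form a group `TwistedProduct α`, a central extension of
`G` by the units, whose associativity is exactly the cocycle identity. Up to the constant
`α(1,1)`, `Ψ_g` is the sum over `x` of the conjugates `|x⟩|g⟩|x⟩⁻¹` computed in this group.
Since `|g'⟩|x⟩ = α(g',x)|g'x⟩` with `α(g',x)` central, `|g'⟩` times the conjugate by `|x⟩` is the
conjugate by `|g'x⟩` times `|g'⟩`, and reindexing `x ↦ g'x` gives centrality. If `h` commutes
with `g`, then `|h⟩|g⟩|h⟩⁻¹ = (α(h,g)/α(g,h))|g⟩`, so reindexing `x ↦ xh` shows that `Ψ_g` is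
fixed by this scalar, and it vanishes unless the scalar is `1`. -/

structure MulTwoCocycle (G A : Type*) [Mul G] [Mul A] where
  toFun : G → G → A
  cocycle' : ∀ g h k, toFun g h * toFun (g * h) k = toFun g (h * k) * toFun h k

namespace MulTwoCocycle

variable {G A : Type*} [Group G] [CommGroup A] (α : MulTwoCocycle G A)

instance : CoeFun (MulTwoCocycle G A) fun _ => G → G → A := ⟨toFun⟩

theorem cocycle (g h k : G) : α g h * α (g * h) k = α g (h * k) * α h k := α.cocycle' g h k

theorem apply_one_right (g : G) : α g 1 = α 1 1 := by
  simpa using α.cocycle g 1 1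

theorem apply_one_left (g : G) : α 1 g = α 1 1 := by
  simpa using (α.cocycle 1 1 g).symm

theorem apply_inv_self (g : G) : α g⁻¹ g = α g g⁻¹ := by
  simpa [apply_one_left, apply_one_right, mul_comm] using (α.cocycle g g⁻¹ g).symm

end MulTwoCocycle

theorem Subgroup.mul_conj_of_mem_center {M : Type*} [Group M] {z : M}
    (hz : z ∈ Subgroup.center M) (w y : M) : z * w * y * (z * w)⁻¹ = w * y * w⁻¹ := by
  calc z * w * y * (z * w)⁻¹ = z * (w * y * w⁻¹) * z⁻¹ := by group
    _ = w * y * w⁻¹ := by rw [← Subgroup.mem_center_iff.1 hz, mul_inv_cancel_right]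

@[ext]
structure TwistedProduct {G A : Type*} [Group G] [CommGroup A] (α : MulTwoCocycle G A) where
  scalar : A
  elem : G

namespace TwistedProduct

variable {G A : Type*} [Group G] [CommGroup A] {α : MulTwoCocycle G A}

instance : Mul (TwistedProduct α) :=
  ⟨fun x y => ⟨x.scalar * y.scalar * α x.elem y.elem, x.elem * y.elem⟩⟩
-- The cocycle is not assumed normalized, so the identity carries the scalar `(α 1 1)⁻¹`.
instance : One (TwistedProduct α) := ⟨⟨(α 1 1)⁻¹, 1⟩⟩
instance : Inv (TwistedProduct α) :=
  ⟨fun x => ⟨(x.scalar * α x.elem x.elem⁻¹ * α 1 1)⁻¹, x.elem⁻¹⟩⟩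

@[simp] theorem mul_scalar (x y : TwistedProduct α) :
    (x * y).scalar = x.scalar * y.scalar * α x.elem y.elem := rfl
@[simp] theorem mul_elem (x y : TwistedProduct α) : (x * y).elem = x.elem * y.elem := rfl
@[simp] theorem one_scalar : (1 : TwistedProduct α).scalar = (α 1 1)⁻¹ := rfl
@[simp] theorem one_elem : (1 : TwistedProduct α).elem = 1 := rfl
@[simp] theorem inv_scalar (x : TwistedProduct α) :
    x⁻¹.scalar = (x.scalar * α x.elem x.elem⁻¹ * α 1 1)⁻¹ := rfl
@[simp] theorem inv_elem (x : TwistedProduct α) : x⁻¹.elem = x.elem⁻¹ := rfl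

instance : Group (TwistedProduct α) :=
  Group.ofLeftAxioms
    (fun x y z => by
      ext
      · calc x.scalar * y.scalar * α x.elem y.elem * z.scalar * α (x.elem * y.elem) z.elem
            = x.scalar * y.scalar * z.scalar * (α x.elem y.elem * α (x.elem * y.elem) z.elem) := by
              ac_rfl
          _ = x.scalar * (y.scalar * z.scalar * α y.elem z.elem) * α x.elem (y.elem * z.elem) := by
              rw [α.cocycle]; ac_rfl
      · exact mul_assoc _ _ _)
    (fun x => by ext <;> simp [α.apply_one_left])
    (fun x => by
      ext
      · change (x.scalar * α x.elem x.elem⁻¹ * α 1 1)⁻¹ * x.scalar * α x.elem⁻¹ x.elem = (α 1 1)⁻¹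
        rw [α.apply_inv_self, mul_assoc _ x.scalar, mul_inv_rev, inv_mul_cancel_right]
      · exact inv_mul_cancel _)

variable (α)

def of (g : G) : TwistedProduct α := ⟨1, g⟩

@[simps]
def ofScalar : A →* TwistedProduct α where
  toFun a := ⟨a * (α 1 1)⁻¹, 1⟩
  map_one' := by ext <;> simp
  map_mul' a b := by ext <;> simp [mul_comm, mul_left_comm, mul_assoc]

theorem ofScalar_mul_mk (a b : A) (g : G) : ofScalar α a * ⟨b, g⟩ = ⟨a * b, g⟩ := by
  ext <;> simp [α.apply_one_left, mul_comm, mul_left_comm]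

theorem ofScalar_mem_center (a : A) : ofScalar α a ∈ Subgroup.center (TwistedProduct α) := by
  refine Subgroup.mem_center_iff.2 fun x => ?_
  ext <;> simp [α.apply_one_left, α.apply_one_right, mul_comm, mul_left_comm]

theorem of_mul_of (g h : G) : of α g * of α h = ofScalar α (α g h) * of α (g * h) := by
  ext <;> simp [of, α.apply_one_left]

theorem ofScalar_mul_conj_of (x g : G) :
    ofScalar α (α 1 1) * (of α x * of α g * (of α x)⁻¹) =
      ⟨α x g * α (x * g) x⁻¹ / α x x⁻¹, x * g * x⁻¹⟩ := by
  ext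
  · simp only [ofScalar_apply_scalar, ofScalar_apply_elem, mul_scalar, inv_scalar, mul_elem,
      inv_elem, of, one_mul, α.apply_one_left]
    simp [div_eq_mul_inv, mul_comm, mul_left_comm]
  · simp [of]

theorem of_mul_conj (g' x g : G) :
    of α g' * (of α x * of α g * (of α x)⁻¹) =
      of α (g' * x) * of α g * (of α (g' * x))⁻¹ * of α g' := by
  rw [← Subgroup.mul_conj_of_mem_center (ofScalar_mem_center α (α g' x)) (of α (g' * x)),
    ← of_mul_of]
  group

theorem conj_of_of_of_commute {g h : G} (hgh : g * h = h * g) :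
    of α h * of α g * (of α h)⁻¹ = ofScalar α (α h g / α g h) * of α g :=
  calc of α h * of α g * (of α h)⁻¹ = ofScalar α (α h g) * of α (h * g) * (of α h)⁻¹ := by
        rw [of_mul_of]
    _ = ofScalar α (α h g) * (ofScalar α (α g h))⁻¹ * (of α g * of α h) * (of α h)⁻¹ := by
        rw [← hgh, of_mul_of]; group
    _ = ofScalar α (α h g / α g h) * of α g := by
        rw [map_div, div_eq_mul_inv]; group

theorem conj_of_mul_of_of_commute (x : G) {g h : G} (hgh : g * h = h * g) :
    of α (x * h) * of α g * (of α (x * h))⁻¹ =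
      ofScalar α (α h g / α g h) * (of α x * of α g * (of α x)⁻¹) :=
  calc of α (x * h) * of α g * (of α (x * h))⁻¹
      = of α x * (of α h * of α g * (of α h)⁻¹) * (of α x)⁻¹ := by
        rw [← Subgroup.mul_conj_of_mem_center (ofScalar_mem_center α (α x h)) (of α (x * h)),
          ← of_mul_of]
        group
    _ = of α x * ofScalar α (α h g / α g h) * of α g * (of α x)⁻¹ := by
        rw [conj_of_of_of_commute α hgh]; group
    _ = ofScalar α (α h g / α g h) * (of α x * of α g * (of α x)⁻¹) := by
        rw [Subgroup.mem_center_iff.1 (ofScalar_mem_center α _) (of α x)]; group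

end TwistedProduct

section TwistedGroupAlgebra

variable {G R : Type*} [Group G] [DecidableEq G] [CommRing R]

namespace TwistedProduct

variable (α : MulTwoCocycle G Rˣ)

def toMonomial (x : TwistedProduct α) : G → R := Pi.single x.elem (x.scalar : R)

theorem toMonomial_of (g : G) : toMonomial α (of α g) = Pi.single g 1 := by
  simp [toMonomial, of]

theorem toMonomial_ofScalar_mul (a : Rˣ) (x : TwistedProduct α) :
    toMonomial α (ofScalar α a * x) = (a : R) • toMonomial α x := by
  rw [ofScalar_mul_mk]
  simp only [toMonomial, Units.val_mul]
  rw [← smul_eq_mul, Pi.single_smul']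

end TwistedProduct

open TwistedProduct

variable [Fintype G]

def twistedMul (α : G → G → R) : (G → R) →ₗ[R] (G → R) →ₗ[R] (G → R) :=
  LinearMap.mk₂ R (fun f₁ f₂ k => ∑ a, ∑ b, if a * b = k then α a b * f₁ a * f₂ b else 0)
    (fun f₁ f₁' f₂ => by
      funext k
      simp only [Pi.add_apply, mul_add, add_mul, ← Finset.sum_add_distrib, ite_add_zero])
    (fun c f₁ f₂ => by
      funext k
      simp only [Pi.smul_apply, smul_eq_mul, Finset.mul_sum, mul_ite, mul_zero]
      refine Finset.sum_congr rfl fun a _ => Finset.sum_congr rfl fun b _ => ?_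
      split_ifs <;> ring)
    (fun f₁ f₂ f₂' => by
      funext k
      simp only [Pi.add_apply, mul_add, ← Finset.sum_add_distrib, ite_add_zero])
    (fun c f₁ f₂ => by
      funext k
      simp only [Pi.smul_apply, smul_eq_mul, Finset.mul_sum, mul_ite, mul_zero]
      refine Finset.sum_congr rfl fun a _ => Finset.sum_congr rfl fun b _ => ?_
      split_ifs <;> ring)

theorem twistedMul_single_single (α : G → G → R) (g h : G) (a b : R) :
    twistedMul α (Pi.single g a) (Pi.single h b) = Pi.single (g * h) (α g h * a * b) := by
  funext k
  change ∑ x, ∑ y, _ = _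
  rw [Fintype.sum_eq_single g fun x hx => by simp [hx],
    Fintype.sum_eq_single h fun y hy => by simp [hy]]
  simp [Pi.single_apply, eq_comm]

theorem twistedMul_toMonomial (α : MulTwoCocycle G Rˣ) (x y : TwistedProduct α) :
    twistedMul (fun g h => (α g h : R)) (toMonomial α x) (toMonomial α y) =
      toMonomial α (x * y) := by
  rw [toMonomial, toMonomial, twistedMul_single_single, toMonomial]
  congr 1
  push_cast [mul_scalar]
  ring

def twistedClassSum (α : MulTwoCocycle G Rˣ) (g : G) : G → R :=
  ∑ x, toMonomial α (of α x * of α g * (of α x)⁻¹)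

theorem twistedMul_single_twistedClassSum_comm (α : MulTwoCocycle G Rˣ) (g' g : G) :
    twistedMul (fun g h => (α g h : R)) (Pi.single g' 1) (twistedClassSum α g) =
      twistedMul (fun g h => (α g h : R)) (twistedClassSum α g) (Pi.single g' 1) := by
  simp only [← toMonomial_of α g', twistedClassSum, map_sum, LinearMap.sum_apply,
    twistedMul_toMonomial, of_mul_conj]
  exact Equiv.sum_comp (Equiv.mulLeft g') fun x =>
    toMonomial α (of α x * of α g * (of α x)⁻¹ * of α g')

theorem twistedClassSum_eq_zero [IsDomain R] (α : MulTwoCocycle G Rˣ) {g h : G}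
    (hgh : g * h = h * g) (hα : α g h ≠ α h g) : twistedClassSum α g = 0 := by
  set c : R := ((α h g / α g h : Rˣ) : R)
  have hc : c ≠ 1 := by
    rw [Ne, Units.val_eq_one, div_eq_one]
    exact hα.symm
  have hfix : c • twistedClassSum α g = twistedClassSum α g :=
    calc c • twistedClassSum α g
        = ∑ x, toMonomial α (of α (x * h) * of α g * (of α (x * h))⁻¹) := by
          simp only [twistedClassSum, conj_of_mul_of_of_commute α _ hgh, toMonomial_ofScalar_mul,
            Finset.smul_sum, c]
      _ = twistedClassSum α g :=
          Equiv.sum_comp (Equiv.mulRight h) fun x => toMonomial α (of α x * of α g * (of α x)⁻¹)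
  have hzero : (c - 1) • twistedClassSum α g = 0 := by
    rw [sub_smul, one_smul, hfix, sub_self]
  exact (smul_eq_zero.1 hzero).resolve_left (sub_ne_zero.2 hc)

theorem smul_twistedClassSum (α : MulTwoCocycle G Rˣ) (g : G) :
    (α 1 1 : R) • twistedClassSum α g =
      ∑ x, ((α x g * α (x * g) x⁻¹ / α x x⁻¹ : Rˣ) : R) • Pi.single (x * g * x⁻¹) 1 := by
  simp only [twistedClassSum, Finset.smul_sum, ← toMonomial_ofScalar_mul, ofScalar_mul_conj_of]
  simp [toMonomial, ← Pi.single_smul']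

end TwistedGroupAlgebra

/-- In the α-twisted group algebra, Ψ_g := Σ_x (α(x,g)α(xg,x⁻¹)/α(x,x⁻¹))|xgx⁻¹⟩
is central, and Ψ_g = 0 unless g is α-regular. -/
theorem twisted_center_element {G : Type*} [Group G] [Fintype G] [DecidableEq G]
    (α : G → G → ℂ) (hnorm : ∀ g g', ‖α g g'‖ = 1)
    (hcoc : ∀ g g' g'', α g g' * α (g * g') g'' = α g (g' * g'') * α g' g'')
    (g : G) :
    let bas : G → (G → ℂ) := fun k h => if h = k then 1 else 0
    let tmul : (G → ℂ) → (G → ℂ) → (G → ℂ) := fun f₁ f₂ k =>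
      ∑ a : G, ∑ b : G, if a * b = k then α a b * f₁ a * f₂ b else 0
    let Ψ : G → ℂ :=
      ∑ x : G, (α x g * α (x * g) x⁻¹ / α x x⁻¹) • bas (x * g * x⁻¹)
    (∀ g' : G, tmul (bas g') Ψ = tmul Ψ (bas g')) ∧
    ((¬ ∀ h : G, g * h = h * g → α g h = α h g) → Ψ = 0) := by
  intro bas tmul Ψ
  have hα (a b : G) : α a b ≠ 0 := fun h => by simpa [h] using hnorm a b
  let β : MulTwoCocycle G ℂˣ :=
    ⟨fun a b => Units.mk0 (α a b) (hα a b), fun a b c => Units.ext (by simpa using hcoc a b c)⟩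
  have hbas : bas = fun k => Pi.single k 1 := by
    funext k h
    simp [bas, Pi.single_apply]
  have hΨ : Ψ = (β 1 1 : ℂ) • twistedClassSum β g := by
    rw [smul_twistedClassSum]
    simp [Ψ, hbas, β]
  refine ⟨fun g' => ?_, fun hreg => ?_⟩
  · have htmul : tmul = fun f₁ f₂ => twistedMul (fun a b => (β a b : ℂ)) f₁ f₂ := rfl
    simp only [htmul, hΨ, hbas, map_smul, LinearMap.smul_apply,
      twistedMul_single_twistedClassSum_comm]
  · simp only [not_forall] at hreg
    obtain ⟨h, hgh, hne⟩ := hreg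
    rw [hΨ, twistedClassSum_eq_zero β hgh fun e => hne congr(Units.val $e), smul_zero]
end

section
/- Let G be the group of order 128 generated by a,b,c₁,c₂ subject to a² = b² = c₁² = c₂² = 1, [a,b] = [c₁,c₂], [b,c₁] = [b,c₂] = 1, and [[G,G],G] = 1 (a central extension of (ℤ/2)⁴ by (ℤ/2)³). Writing each g ∈ G uniquely as a^{n_a} b^{n_b} c₁^{ℓ₁} c₂^{ℓ₂} [a,b]^k [a,c₁]^{d₁} [a,c₂]^{d₂}, the map α(g,g') := (-1)^{n_a(g)·n_b(g')} is a 2-cocycle on G such that every element of G is α-regular (i.e., α(g,g') = α(g',g) whenever gg' = g'g), yet α is not a 2-coboundary. -/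
@[ext]
structure PT where
  na : ZMod 2
  nb : ZMod 2
  l1 : ZMod 2
  l2 : ZMod 2
  k  : ZMod 2
  d1 : ZMod 2
  d2 : ZMod 2
  deriving DecidableEq

namespace PT

instance : Mul PT :=
  ⟨fun g g' =>
    ⟨g.na + g'.na, g.nb + g'.nb, g.l1 + g'.l1, g.l2 + g'.l2,
     g.k + g'.k + g'.na * g.nb + g'.l1 * g.l2,
     g.d1 + g'.d1 + g'.na * g.l1,
     g.d2 + g'.d2 + g'.na * g.l2⟩⟩

instance : One PT := ⟨⟨0, 0, 0, 0, 0, 0, 0⟩⟩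

instance : Inv PT :=
  ⟨fun g => ⟨g.na, g.nb, g.l1, g.l2, g.k + g.na * g.nb + g.l1 * g.l2,
    g.d1 + g.na * g.l1, g.d2 + g.na * g.l2⟩⟩

@[simp] lemma mul_na (g g' : PT) : (g * g').na = g.na + g'.na := rfl
@[simp] lemma mul_nb (g g' : PT) : (g * g').nb = g.nb + g'.nb := rfl
@[simp] lemma mul_l1 (g g' : PT) : (g * g').l1 = g.l1 + g'.l1 := rfl
@[simp] lemma mul_l2 (g g' : PT) : (g * g').l2 = g.l2 + g'.l2 := rfl
@[simp] lemma mul_k (g g' : PT) :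
    (g * g').k = g.k + g'.k + g'.na * g.nb + g'.l1 * g.l2 := rfl
@[simp] lemma mul_d1 (g g' : PT) : (g * g').d1 = g.d1 + g'.d1 + g'.na * g.l1 := rfl
@[simp] lemma mul_d2 (g g' : PT) : (g * g').d2 = g.d2 + g'.d2 + g'.na * g.l2 := rfl
@[simp] lemma one_na : (1 : PT).na = 0 := rfl
@[simp] lemma one_nb : (1 : PT).nb = 0 := rfl
@[simp] lemma one_l1 : (1 : PT).l1 = 0 := rfl
@[simp] lemma one_l2 : (1 : PT).l2 = 0 := rfl
@[simp] lemma one_k : (1 : PT).k = 0 := rfl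
@[simp] lemma one_d1 : (1 : PT).d1 = 0 := rfl
@[simp] lemma one_d2 : (1 : PT).d2 = 0 := rfl
@[simp] lemma inv_na (g : PT) : g⁻¹.na = g.na := rfl
@[simp] lemma inv_nb (g : PT) : g⁻¹.nb = g.nb := rfl
@[simp] lemma inv_l1 (g : PT) : g⁻¹.l1 = g.l1 := rfl
@[simp] lemma inv_l2 (g : PT) : g⁻¹.l2 = g.l2 := rfl
@[simp] lemma inv_k (g : PT) : g⁻¹.k = g.k + g.na * g.nb + g.l1 * g.l2 := rfl
@[simp] lemma inv_d1 (g : PT) : g⁻¹.d1 = g.d1 + g.na * g.l1 := rfl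
@[simp] lemma inv_d2 (g : PT) : g⁻¹.d2 = g.d2 + g.na * g.l2 := rfl

lemma zmod2_add_self (x : ZMod 2) : x + x = 0 := by
  fin_cases x <;> rfl

lemma zmod2_mul_two (x : ZMod 2) : x * 2 = 0 := by
  fin_cases x <;> rfl

lemma zmod2_two_mul (x : ZMod 2) : 2 * x = 0 := by
  fin_cases x <;> rfl

instance : Group PT where
  mul_assoc a b c := by ext <;> simp <;> ring
  one_mul a := by ext <;> simp
  mul_one a := by ext <;> simp
  inv_mul_cancel a := by
    ext <;> simp <;>
      first
        | exact zmod2_add_self _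
        | (ring_nf; simp [zmod2_add_self, zmod2_mul_two, zmod2_two_mul])

end PT

/-!
The cocycle is `(-1)^(n_a ⊗ n_b)` for the two homomorphisms `n_a, n_b : G → ℤ/2`, so the
cocycle identity is bilinearity. Commuting elements have equal `n_a(g) n_b(g')` and
`n_a(g') n_b(g)`, read off the commutator coordinates. If `α = δβ`, then a relation
`h g = g h z` forces `β z = α(g,h) α(gh,z) / α(h,g)`; applied to the two presentations
`x = [a,b] = [c₁,c₂]` of the same central element this gives `β x = -1` and `β x = 1`.
-/

section RootOfUnityPow

variable {M : Type*} [Monoid M] {n : ℕ} {u : M}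

lemma pow_val_add [NeZero n] (hu : u ^ n = 1) (x y : ZMod n) :
    u ^ (x + y).val = u ^ x.val * u ^ y.val := by
  rw [ZMod.val_add, ← pow_eq_pow_mod _ hu, pow_add]

lemma pow_val_mul (hu : u ^ n = 1) (x y : ZMod n) :
    u ^ (x * y).val = u ^ (x.val * y.val) := by
  rw [ZMod.val_mul, ← pow_eq_pow_mod _ hu]

end RootOfUnityPow

lemma pow_val_mul_val_isCocycle {G M : Type*} [Mul G] [CommMonoid M] {n : ℕ} [NeZero n]
    {u : M} (hu : u ^ n = 1) {f h : G → ZMod n}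
    (hf : ∀ g g', f (g * g') = f g + f g') (hh : ∀ g g', h (g * g') = h g + h g')
    (g g' g'' : G) :
    u ^ ((f g).val * (h g').val) * u ^ ((f (g * g')).val * (h g'').val) =
      u ^ ((f g).val * (h (g' * g'')).val) * u ^ ((f g').val * (h g'').val) := by
  simp only [← pow_val_mul hu, ← pow_val_add hu, hf, hh]
  ring_nf

lemma coboundary_commutator_identity {G K : Type*} [Mul G] [Field K] {α : G → G → K}
    {β : G → K} (hαβ : ∀ g g', α g g' = β g * β g' / β (g * g')) {g h z : G}
    (hgh : β (g * h) ≠ 0) (hz : h * g = g * h * z) :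
    α g h * α (g * h) z = α h g * β z := by
  rw [hαβ, hαβ, hαβ, ← hz]
  field_simp

namespace PT

def equivProd : PT ≃ ZMod 2 × ZMod 2 × ZMod 2 × ZMod 2 × ZMod 2 × ZMod 2 × ZMod 2 where
  toFun g := (g.na, g.nb, g.l1, g.l2, g.k, g.d1, g.d2)
  invFun p := ⟨p.1, p.2.1, p.2.2.1, p.2.2.2.1, p.2.2.2.2.1, p.2.2.2.2.2.1, p.2.2.2.2.2.2⟩

lemma natCard_eq : Nat.card PT = 128 := by
  simp [Nat.card_congr equivProd, Nat.card_eq_fintype_card]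

/- If `g.na = 1`, the `d`-coordinates give `g'.l = g'.na • g.l`, which makes the `c₁c₂`
part of the `k`-coordinate symmetric; likewise if `g'.na = 1`; if both vanish, so do both
sides. -/
lemma na_mul_nb_eq_of_commute {g g' : PT} (hc : Commute g g') :
    g.na * g'.nb = g'.na * g.nb := by
  have hk := congrArg k hc.eq
  have hd1 := congrArg d1 hc.eq
  have hd2 := congrArg d2 hc.eq
  simp only [mul_k, mul_d1, mul_d2] at hk hd1 hd2
  grind

def a : PT := ⟨1, 0, 0, 0, 0, 0, 0⟩
def b : PT := ⟨0, 1, 0, 0, 0, 0, 0⟩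
def c₁ : PT := ⟨0, 0, 1, 0, 0, 0, 0⟩
def c₂ : PT := ⟨0, 0, 0, 1, 0, 0, 0⟩
def x : PT := ⟨0, 0, 0, 0, 1, 0, 0⟩

lemma b_mul_a : b * a = a * b * x := by decide

lemma c₂_mul_c₁ : c₂ * c₁ = c₁ * c₂ * x := by decide

end PT

/-- The cocycle α(g,g') = (-1)^{n_a(g)·n_b(g')} on the order-128 Pollmann–Turner
group PT is a 2-cocycle that is symmetric on every commuting pair (every element
is α-regular), yet it is not a 2-coboundary: it represents a nontrivial element
of the Bogomolov multiplier B(PT). -/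
theorem PT_bogomolov_multiplier :
    let α : PT → PT → ℂ := fun g g' => (-1 : ℂ) ^ (g.na.val * g'.nb.val)
    Nat.card PT = 128 ∧
    (∀ g g' g'' : PT, α g g' * α (g * g') g'' = α g (g' * g'') * α g' g'') ∧
    (∀ g g' : PT, g * g' = g' * g → α g g' = α g' g) ∧
    ¬ ∃ β : PT → ℂ, (∀ g, ‖β g‖ = 1) ∧
        ∀ g g', α g g' = β g * β g' / β (g * g') := by
  intro α
  have hu : (-1 : ℂ) ^ 2 = 1 := by norm_num
  refine ⟨PT.natCard_eq, pow_val_mul_val_isCocycle hu PT.mul_na PT.mul_nb, ?_, ?_⟩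
  · intro g g' hc
    simp only [α, ← pow_val_mul hu, PT.na_mul_nb_eq_of_commute hc]
  · rintro ⟨β, hβ, hαβ⟩
    have hne (g : PT) : β g ≠ 0 := fun h0 => by simpa [h0] using hβ g
    have hab := coboundary_commutator_identity hαβ (hne _) PT.b_mul_a
    have hcc := coboundary_commutator_identity hαβ (hne _) PT.c₂_mul_c₁
    norm_num [α, PT.a, PT.b, PT.c₁, PT.c₂, PT.x, ZMod.val_one] at hab hcc
    norm_num [← hab] at hcc
end
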